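/- arXiv:1907.05309 — 3 statements merged into one kernel-verified Lean document; each statement's English description precedes it below -/
import Mathlib

section
/- Let A : Matrix (Fin n) (Fin n) ℝ with fill relation F. If i < j and F i j, then j is an ancestor of i in the elimination tree: there exist m ≥ 1 and a finite sequence t_0 = i, t_1, …, t_m = j such that for each l < m the set {u : t_l < u ∧ F t_l u} is nonempty and t_{l+1} = parent t_l. (In particular, the filled graph has no cross edges: every fill edge joins a vertex to one of its ancestors in the elimination tree.) -/
/-!
Let `p` be the elimination-tree parent of `i`, so `i < p ≤ j`. If `p ≠ j`, gluing the fill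
walks `p → i` and `i → j` at `i` gives a walk from `p` to `j` whose interior vertices are all
at most `i < p`, hence `F p j` with `p < j`. Descending induction on `i` then climbs from `p`
to `j` along parents.
-/

/-- The undirected graph `G(A)` of a square real matrix `A`: `i` is adjacent to `j` iff
`i ≠ j` and (`A i j ≠ 0` or `A j i ≠ 0`). -/
def graphOf {n : ℕ} (A : Matrix (Fin n) (Fin n) ℝ) : SimpleGraph (Fin n) where
  Adj i j := i ≠ j ∧ (A i j ≠ 0 ∨ A j i ≠ 0)
  symm := by
    constructor
    intro i j h
    exact ⟨h.1.symm, h.2.symm⟩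
  loopless := by
    constructor
    intro i h
    exact h.1 rfl

/-- The fill relation of `A`: `fill A i j` iff `i ≠ j` and there is a walk from `i` to
`j` in `G(A)` all of whose interior vertices `u` satisfy `u < i` and `u < j`. -/
def fill {n : ℕ} (A : Matrix (Fin n) (Fin n) ℝ) (i j : Fin n) : Prop :=
  i ≠ j ∧ ∃ w : (graphOf A).Walk i j, ∀ u ∈ w.support.tail.dropLast, u < i ∧ u < j

theorem List.tail_dropLast_append_subset {α : Type*} (l₁ l₂ : List α) :
    (l₁ ++ l₂).tail.dropLast ⊆ l₁.tail ++ l₂.dropLast := by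
  intro u hu
  cases l₁ with
  | nil => exact List.mem_of_mem_tail (List.tail_dropLast ▸ hu)
  | cons a s =>
    rw [List.cons_append, List.tail_cons, List.dropLast_append] at hu
    split_ifs at hu
    · exact List.mem_append_left _ (List.dropLast_subset _ hu)
    · simpa using hu

theorem Relation.TransGen.exists_seq {α : Type*} {r : α → α → Prop} {a b : α}
    (h : Relation.TransGen r a b) :
    ∃ m : ℕ, 1 ≤ m ∧ ∃ t : ℕ → α, t 0 = a ∧ t m = b ∧ ∀ l < m, r (t l) (t (l + 1)) := by
  induction h using Relation.TransGen.head_induction_on with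
  | @single a hab => exact ⟨1, le_rfl, fun l => if l = 0 then a else b, rfl, rfl, by simpa⟩
  | @head a c hac _ ih =>
    obtain ⟨m, -, t, ht0, htm, ht⟩ := ih
    refine ⟨m + 1, Nat.le_add_left 1 m, fun l => Nat.casesOn l a t, rfl, htm, ?_⟩
    rintro (_ | l) hl
    · simpa [ht0] using hac
    · exact ht l (by omega)

namespace SimpleGraph.Walk

variable {V : Type*} {G : SimpleGraph V}

theorem support_reverse_tail_dropLast {a b : V} (p : G.Walk a b) :
    p.reverse.support.tail.dropLast = p.support.tail.dropLast.reverse := by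
  rw [support_reverse, List.tail_reverse, List.dropLast_reverse, List.tail_dropLast]

theorem mem_support_tail_dropLast_or_eq_of_mem_tail_support {a b u : V} {p : G.Walk a b}
    (hu : u ∈ p.support.tail) : u ∈ p.support.tail.dropLast ∨ u = b := by
  rw [← p.dropLast_support_concat, List.tail_append] at hu
  split_ifs at hu
  · simp at hu
  · rw [← List.tail_dropLast]
    simpa using hu

theorem mem_support_append_tail_dropLast {a b c u : V} {p : G.Walk a b} {q : G.Walk b c}
    (hu : u ∈ (p.append q).support.tail.dropLast) :
    u ∈ p.support.tail.dropLast ∨ u = b ∨ u ∈ q.support.tail.dropLast := by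
  rw [support_append] at hu
  rcases List.mem_append.mp (List.tail_dropLast_append_subset _ _ hu) with h | h
  · exact (mem_support_tail_dropLast_or_eq_of_mem_tail_support h).imp_right .inl
  · exact .inr (.inr h)

end SimpleGraph.Walk

section EliminationTree

variable {n : ℕ} (A : Matrix (Fin n) (Fin n) ℝ)

def IsElimTreeParent (i p : Fin n) : Prop :=
  IsLeast {u : Fin n | i < u ∧ fill A i u} p

variable {A}

theorem fill_of_fill_of_fill {i p j : Fin n} (hip : i < p) (hij : i < j) (hpj : p ≠ j)
    (hp : fill A i p) (hj : fill A i j) : fill A p j := by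
  obtain ⟨-, w₁, hw₁⟩ := hp
  obtain ⟨-, w₂, hw₂⟩ := hj
  refine ⟨hpj, w₁.reverse.append w₂, fun u hu => ?_⟩
  have hui : u ≤ i := by
    rcases SimpleGraph.Walk.mem_support_append_tail_dropLast hu with h | rfl | h
    · rw [w₁.support_reverse_tail_dropLast, List.mem_reverse] at h
      exact (hw₁ u h).1.le
    · exact le_rfl
    · exact (hw₂ u h).1.le
  exact ⟨hui.trans_lt hip, hui.trans_lt hij⟩

theorem exists_isElimTreeParent {i j : Fin n} (hij : i < j) (hF : fill A i j) :
    ∃ p, IsElimTreeParent A i p :=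
  have hne : {u : Fin n | i < u ∧ fill A i u}.Nonempty := ⟨j, hij, hF⟩
  ⟨wellFounded_lt.min _ hne, wellFounded_lt.min_mem _ hne, fun _ hu => wellFounded_lt.min_le hu⟩

theorem transGen_isElimTreeParent_of_fill {i j : Fin n} (hij : i < j) (hF : fill A i j) :
    Relation.TransGen (IsElimTreeParent A) i j := by
  induction i using WellFoundedGT.induction with
  | _ i ih =>
    obtain ⟨p, hp⟩ := exists_isElimTreeParent hij hF
    rcases (hp.2 ⟨hij, hF⟩).eq_or_lt with rfl | hpj
    · exact .single hp
    · exact .head hp (ih p hp.1.1 hpj (fill_of_fill_of_fill hp.1.1 hij hpj.ne hp.1.2 hF))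

end EliminationTree

/-- if `i < j` and `fill A i j`, then `j` is an ancestor of `i` in the
elimination tree: there is an `m ≥ 1` and a sequence `t 0 = i`, …, `t m = j` where each
`t (l+1)` is the elimination-tree parent of `t l`, i.e. the least element of the
(nonempty) set `{u | t l < u ∧ fill A (t l) u}`. -/
theorem fill_edge_ancestor {n : ℕ} (A : Matrix (Fin n) (Fin n) ℝ) (i j : Fin n)
    (hij : i < j) (hF : fill A i j) :
    ∃ m : ℕ, 1 ≤ m ∧ ∃ t : ℕ → Fin n, t 0 = i ∧ t m = j ∧
      ∀ l < m, IsLeast {u : Fin n | t l < u ∧ fill A (t l) u} (t (l + 1)) := by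
  exact (transGen_isElimTreeParent_of_fill hij hF).exists_seq
end

section
/- Let A : Matrix (Fin n) (Fin n) ℝ with fill relation F, and for each vertex k let P_k := {i : k < i ∧ F k i} be the strictly lower pattern of column k of the factor. Then for every k, P_k equals the union of {i : k < i ∧ (A k i ≠ 0 ∨ A i k ≠ 0)} with the sets {i : k < i ∧ F j i} taken over all j such that parent j = k. (This is the correctness of the column fill-in computation that supplements column k with the entries of A and with the patterns of the children of k in the elimination tree.) -/
/-!
If `k < i` and `fill A k i` but `k`, `i` are not adjacent, let `m` be the largest interior
vertex of a fill path from `k` to `i`; cutting the path at `m` gives fill paths from `m < k`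
to both `k` and `i`. Conversely two fill walks out of a common smaller vertex concatenate to
a fill walk. Among all `j < k` with `fill A j k` and `fill A j i`, the largest is a child of
`k`: a vertex `u` with `j < u < k` and `fill A j u` would be another such vertex.
-/

namespace SimpleGraph

variable {V : Type*} {G : SimpleGraph V} {a b m u : V}

namespace Walk

lemma mem_tail_dropLast_support (p : G.Walk a b) (hu : u ∈ p.support) (ha : u ≠ a)
    (hb : u ≠ b) : u ∈ p.support.tail.dropLast := by
  rw [← p.cons_tail_support, ← p.dropLast_support_concat] at hu
  grind

lemma IsPath.ne_of_mem_tail_dropLast_support {p : G.Walk a b} (hp : p.IsPath)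
    (hu : u ∈ p.support.tail.dropLast) : u ≠ a ∧ u ≠ b := by
  have hnodup := hp.support_nodup
  rw [← p.cons_tail_support, ← p.dropLast_support_concat] at hnodup
  grind

end Walk

variable [LinearOrder V]

def FillReachable (G : SimpleGraph V) (a b : V) : Prop :=
  ∃ w : G.Walk a b, ∀ u ∈ w.support, u ≠ a → u ≠ b → u < a ∧ u < b

lemma Adj.fillReachable (h : G.Adj a b) : G.FillReachable a b :=
  ⟨h.toWalk, by simp +contextual⟩

lemma FillReachable.symm (h : G.FillReachable a b) : G.FillReachable b a := by
  obtain ⟨w, hw⟩ := h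
  refine ⟨w.reverse, fun u hu hb ha => (hw u ?_ ha hb).symm⟩
  simpa using hu

lemma FillReachable.trans_of_lt (h₁ : G.FillReachable a m) (h₂ : G.FillReachable m b)
    (ha : m < a) (hb : m < b) : G.FillReachable a b := by
  obtain ⟨w₁, hw₁⟩ := h₁
  obtain ⟨w₂, hw₂⟩ := h₂
  refine ⟨w₁.append w₂, fun u hu hua hub => ?_⟩
  rcases eq_or_ne u m with rfl | hum
  · exact ⟨ha, hb⟩
  rcases (w₁.mem_support_append_iff w₂).1 hu with hu | hu
  · obtain ⟨hua', hum'⟩ := hw₁ u hu hua hum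
    exact ⟨hua', hum'.trans hb⟩
  · obtain ⟨hum', hub'⟩ := hw₂ u hu hum hub
    exact ⟨hum'.trans ha, hub'⟩

lemma Walk.IsPath.fillReachable_of_mem_support {p : G.Walk a b} (hp : p.IsPath)
    (hm : m ∈ p.support) (hmb : m ≠ b)
    (hlow : ∀ u ∈ p.support, u ≠ a → u ≠ b → u < a ∧ u ≤ m) : G.FillReachable a m := by
  classical
  refine ⟨p.takeUntil m hm, fun u hu hua hum => ?_⟩
  have hub : u ≠ b := fun hub => Walk.endpoint_notMem_support_takeUntil hp hm hmb.symm (hub ▸ hu)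
  obtain ⟨hua', hum'⟩ := hlow u (p.support_takeUntil_subset_support hm hu) hua hub
  exact ⟨hua', hum'.lt_of_ne hum⟩

lemma FillReachable.exists_isPath (h : G.FillReachable a b) :
    ∃ p : G.Walk a b, p.IsPath ∧ ∀ u ∈ p.support, u ≠ a → u ≠ b → u < a ∧ u < b := by
  classical
  obtain ⟨w, hw⟩ := h
  exact ⟨w.bypass, w.bypass_isPath, fun u hu => hw u (w.support_bypass_subset_support hu)⟩

/-- Split a fill path at its largest interior vertex. -/
lemma FillReachable.exists_lt_of_not_adj (h : G.FillReachable a b) (hab : a ≠ b)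
    (hadj : ¬G.Adj a b) : ∃ m, m < a ∧ m < b ∧ G.FillReachable m a ∧ G.FillReachable m b := by
  obtain ⟨p, hp, hlow⟩ := h.exists_isPath
  have hnil : ¬p.Nil := Walk.not_nil_of_ne hab
  have hsnd : p.snd ∈ {u | u ∈ p.support ∧ u ≠ a ∧ u ≠ b} :=
    ⟨p.getVert_mem_support 1, (p.adj_snd hnil).ne.symm, fun hb => hadj (hb ▸ p.adj_snd hnil)⟩
  obtain ⟨m, ⟨hm, hma, hmb⟩, hmax⟩ :=
    Set.exists_max_image _ id (p.support.finite_toSet.subset fun u hu => hu.1) ⟨_, hsnd⟩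
  have hle : ∀ u ∈ p.support, u ≠ a → u ≠ b → u ≤ m := fun u hu hua hub => hmax u ⟨hu, hua, hub⟩
  obtain ⟨hma', hmb'⟩ := hlow m hm hma hmb
  have ham : G.FillReachable a m := hp.fillReachable_of_mem_support hm hmb
    fun u hu hua hub => ⟨(hlow u hu hua hub).1, hle u hu hua hub⟩
  have hbm : G.FillReachable b m := by
    refine hp.reverse.fillReachable_of_mem_support (by simpa using hm) hma fun u hu hub hua => ?_
    rw [Walk.support_reverse, List.mem_reverse] at hu
    exact ⟨(hlow u hu hua hub).2, hle u hu hua hub⟩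
  exact ⟨m, hma', hmb', ham.symm, hbm.symm⟩

end SimpleGraph

open SimpleGraph

variable {n : ℕ} {A : Matrix (Fin n) (Fin n) ℝ} {a b m : Fin n}

lemma fill_iff : fill A a b ↔ a ≠ b ∧ (graphOf A).FillReachable a b := by
  constructor
  · rintro ⟨hab, w, hw⟩
    exact ⟨hab, w, fun u hu ha hb => hw u (w.mem_tail_dropLast_support hu ha hb)⟩
  · rintro ⟨hab, hreach⟩
    obtain ⟨p, hp, hlow⟩ := hreach.exists_isPath
    refine ⟨hab, p, fun u hu => ?_⟩
    obtain ⟨ha, hb⟩ := hp.ne_of_mem_tail_dropLast_support hu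
    exact hlow u (p.support.tail_subset (p.support.tail.dropLast_subset hu)) ha hb

lemma fill_symm (h : fill A a b) : fill A b a := by
  rw [fill_iff] at h ⊢
  exact ⟨h.1.symm, h.2.symm⟩

lemma fill_of_adj (h : (graphOf A).Adj a b) : fill A a b :=
  fill_iff.2 ⟨h.ne, h.fillReachable⟩

lemma fill_trans_of_lt (h₁ : fill A a m) (h₂ : fill A m b) (ha : m < a) (hb : m < b)
    (hab : a ≠ b) : fill A a b :=
  fill_iff.2 ⟨hab, (fill_iff.1 h₁).2.trans_of_lt (fill_iff.1 h₂).2 ha hb⟩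

lemma adj_or_exists_lt_of_fill (h : fill A a b) :
    (graphOf A).Adj a b ∨ ∃ m, m < a ∧ m < b ∧ fill A m a ∧ fill A m b := by
  obtain ⟨hab, hreach⟩ := fill_iff.1 h
  by_cases hadj : (graphOf A).Adj a b
  · exact Or.inl hadj
  obtain ⟨m, ha, hb, hma, hmb⟩ := hreach.exists_lt_of_not_adj hab hadj
  exact Or.inr ⟨m, ha, hb, fill_iff.2 ⟨ha.ne, hma⟩, fill_iff.2 ⟨hb.ne, hmb⟩⟩

lemma isLeast_fill_of_maximal {k i j : Fin n} (hki : k < i)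
    (hj : Maximal (fun j => j < k ∧ fill A j k ∧ fill A j i) j) :
    IsLeast {u | j < u ∧ fill A j u} k := by
  obtain ⟨⟨hjk, hfk, hfi⟩, hmax⟩ := hj
  refine ⟨⟨hjk, hfk⟩, fun u ⟨hju, hfu⟩ => le_of_not_gt fun huk => ?_⟩
  have hui : u < i := huk.trans hki
  have hu : u < k ∧ fill A u k ∧ fill A u i :=
    ⟨huk, fill_trans_of_lt (fill_symm hfu) hfk hju hjk huk.ne,
      fill_trans_of_lt (fill_symm hfu) hfi hju (hjk.trans hki) hui.ne⟩
  exact (hmax hu hju.le).not_gt hju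

/-- for every vertex `k`, the strictly lower pattern
`P_k = {i | k < i ∧ fill A k i}` of column `k` equals the set of entries of `A` in
column `k` below the diagonal, united with the patterns `{i | k < i ∧ fill A j i}` of
all children `j` of `k` in the elimination tree (`j` is a child of `k` iff `k` is the
least element of `{u | j < u ∧ fill A j u}`). -/
theorem column_pattern_eq {n : ℕ} (A : Matrix (Fin n) (Fin n) ℝ) (k : Fin n) :
    {i : Fin n | k < i ∧ fill A k i} =
      {i : Fin n | k < i ∧ (A k i ≠ 0 ∨ A i k ≠ 0)} ∪
        ⋃ j ∈ {j : Fin n | IsLeast {u : Fin n | j < u ∧ fill A j u} k},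
          {i : Fin n | k < i ∧ fill A j i} := by
  ext i
  simp only [Set.mem_union, Set.mem_ofPred_eq, Set.mem_iUnion, exists_prop]
  constructor
  · rintro ⟨hki, hfill⟩
    rcases adj_or_exists_lt_of_fill hfill with hadj | ⟨m, hmk, -, hmk', hmi'⟩
    · exact Or.inl ⟨hki, hadj.2⟩
    obtain ⟨j, hj⟩ := (Set.toFinite {j | j < k ∧ fill A j k ∧ fill A j i}).exists_maximal
      ⟨m, hmk, hmk', hmi'⟩
    exact Or.inr ⟨j, isLeast_fill_of_maximal hki hj, hki, hj.1.2.2⟩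
  · rintro (⟨hki, ha⟩ | ⟨j, ⟨⟨hjk, hjk'⟩, -⟩, hki, hji⟩)
    · exact ⟨hki, fill_of_adj ⟨hki.ne, ha⟩⟩
    · exact ⟨hki, fill_trans_of_lt (fill_symm hjk') hji hjk (hjk.trans hki) hki.ne⟩
end

section
/- Let A : Matrix (Fin n) (Fin n) ℝ. Define a sequence of simple graphs on Fin n by symbolic Gaussian elimination: G_0 := G(A), and for each k : Fin n (processed in increasing order), G_{k+1} has i adjacent to j iff G_k has i adjacent to j, or (i ≠ j and k < i and k < j and in G_k both i and j are adjacent to k). Then in the final graph G_n, vertices i and j are adjacent if and only if the fill relation F i j holds, i.e. i ≠ j and there exists a walk from i to j in G(A) all of whose interior vertices u satisfy u < i and u < j. -/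
/-- One step of symbolic Gaussian elimination: eliminating vertex `k` makes `i` and `j`
adjacent iff they were already adjacent, or `i ≠ j`, both are larger than `k`, and both
were adjacent to `k`. -/
def elimStep {n : ℕ} (k : Fin n) (G : SimpleGraph (Fin n)) : SimpleGraph (Fin n) where
  Adj i j := G.Adj i j ∨ (i ≠ j ∧ k < i ∧ k < j ∧ G.Adj i k ∧ G.Adj j k)
  symm := by
    constructor
    intro i j h
    rcases h with h | ⟨hne, hi, hj, hik, hjk⟩
    · exact Or.inl h.symm
    · exact Or.inr ⟨hne.symm, hj, hi, hjk, hik⟩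
  loopless := by
    constructor
    intro i h
    rcases h with h | ⟨hne, _⟩
    · exact G.loopless.irrefl i h
    · exact hne rfl

/-- The sequence of graphs `G_0 = G(A)`, `G_{k+1} = elimStep k G_k`, of symbolic Gaussian
elimination, processing the vertices `k : Fin n` in increasing order. -/
def elimSeq {n : ℕ} (A : Matrix (Fin n) (Fin n) ℝ) : ℕ → SimpleGraph (Fin n)
  | 0 => graphOf A
  | m + 1 => if h : m < n then elimStep ⟨m, h⟩ (elimSeq A m) else elimSeq A m

namespace SimpleGraph.Walk

variable {V : Type*} {G : SimpleGraph V} {a b v x : V}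

def interior (w : G.Walk a b) : List V :=
  w.support.tail.dropLast

theorem length_interior (w : G.Walk a b) : w.interior.length = w.length - 1 := by
  simp [interior, length_support]

theorem interior_reverse (w : G.Walk a b) : w.reverse.interior = w.interior.reverse := by
  simp only [interior, support_reverse, List.tail_reverse, List.dropLast_reverse,
    List.tail_dropLast]

theorem mem_interior_or_eq_of_mem_support_tail {w : G.Walk a b} {u : V}
    (hu : u ∈ w.support.tail) : u ∈ w.interior ∨ u = b := by
  by_cases hub : u = b
  · exact Or.inr hub
  refine Or.inl (List.mem_dropLast_of_mem_of_ne_getLast hu ?_)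
  rwa [List.getLast_tail, getLast_support]

theorem interior_append_subset (p : G.Walk a v) (q : G.Walk v b) :
    (p.append q).interior ⊆ p.interior ++ v :: q.interior := by
  intro u hu
  rw [interior, tail_support_append, List.dropLast_append] at hu
  split at hu
  · exact List.mem_append_left _ hu
  · rcases List.mem_append.1 hu with hu | hu
    · rcases mem_interior_or_eq_of_mem_support_tail hu with hu | rfl
      · exact List.mem_append_left _ hu
      · simp
    · simp [interior, hu]

theorem interior_subset_interior_append (p : G.Walk a v) (q : G.Walk v b) :
    p.interior ⊆ (p.append q).interior := by
  intro u hu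
  rw [interior, tail_support_append, List.dropLast_append]
  split
  · exact hu
  · exact List.mem_append_left _ ((List.dropLast_sublist _).subset hu)

theorem interior_takeUntil_subset [DecidableEq V] (w : G.Walk a b) (h : x ∈ w.support) :
    (w.takeUntil x h).interior ⊆ w.interior := by
  conv_rhs => rw [← w.take_spec h]
  exact interior_subset_interior_append _ _

theorem end_notMem_interior_takeUntil [DecidableEq V] (w : G.Walk a b) (h : x ∈ w.support) :
    x ∉ (w.takeUntil x h).interior := by
  set p := w.takeUntil x h
  have hsplit : p.support.dropLast ++ [x] = p.support := by
    simpa only [getLast_support] using List.dropLast_append_getLast p.support_ne_nil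
  have hcount : p.support.dropLast.count x = 0 := by
    have := w.count_support_takeUntil_eq_one h
    rw [← hsplit, List.count_append, List.count_singleton_self] at this
    omega
  rw [interior, ← List.tail_dropLast]
  exact fun hx => List.count_eq_zero.1 hcount (List.tail_subset _ hx)

theorem adj_of_interior_eq_nil {w : G.Walk a b} (hab : a ≠ b) (hw : w.interior = []) :
    G.Adj a b := by
  have hlen : w.length - 1 = 0 := by rw [← length_interior, hw, List.length_nil]
  have hpos : w.length ≠ 0 := fun h => hab (eq_of_length_eq_zero h)
  exact adj_of_length_eq_one (p := w) (by omega)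

end SimpleGraph.Walk

open SimpleGraph

section Fill

variable {n : ℕ}

/-- The graph left by eliminating the vertices `0, …, m - 1` of `G` (`elimSeq_eq_fillGraph`). -/
def fillGraph (G : SimpleGraph (Fin n)) (m : ℕ) : SimpleGraph (Fin n) where
  Adj i j := i ≠ j ∧ ∃ w : G.Walk i j, ∀ u ∈ w.interior, u < i ∧ u < j ∧ (u : ℕ) < m
  symm := ⟨fun i j ⟨hij, w, hw⟩ => ⟨hij.symm, w.reverse, fun u hu => by
    rw [Walk.interior_reverse, List.mem_reverse] at hu
    exact ⟨(hw u hu).2.1, (hw u hu).1, (hw u hu).2.2⟩⟩⟩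
  loopless := ⟨fun _ h => h.1 rfl⟩

theorem fillGraph_zero (G : SimpleGraph (Fin n)) : fillGraph G 0 = G := by
  ext i j
  refine ⟨fun ⟨hij, w, hw⟩ => ?_, fun h => ⟨h.ne, h.toWalk, by simp [Walk.interior]⟩⟩
  refine w.adj_of_interior_eq_nil hij (List.eq_nil_iff_forall_not_mem.2 fun u hu => ?_)
  exact Nat.not_lt_zero _ (hw u hu).2.2

theorem fillGraph_le_succ (G : SimpleGraph (Fin n)) (m : ℕ) :
    fillGraph G m ≤ fillGraph G (m + 1) :=
  fun _ _ ⟨hij, w, hw⟩ =>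
    ⟨hij, w, fun u hu => ⟨(hw u hu).1, (hw u hu).2.1, Nat.lt_succ_of_lt (hw u hu).2.2⟩⟩

theorem fillGraph_succ_le_elimStep (G : SimpleGraph (Fin n)) (k : Fin n) :
    fillGraph G (k + 1) ≤ elimStep k (fillGraph G k) := by
  rintro i j ⟨hij, w, hw⟩
  have below : ∀ u ∈ w.interior, u ≠ k → u < i ∧ u < j ∧ u < k := fun u hu huk =>
    ⟨(hw u hu).1, (hw u hu).2.1,
      (Fin.le_iff_val_le_val.2 (Nat.lt_succ_iff.1 (hw u hu).2.2)).lt_of_ne huk⟩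
  by_cases hk : k ∈ w.interior
  swap
  · exact Or.inl ⟨hij, w, fun u hu => below u hu (ne_of_mem_of_not_mem hu hk)⟩
  have hks : k ∈ w.support := List.tail_subset _ (List.dropLast_subset _ hk)
  have hks' : k ∈ w.reverse.support := by simpa using hks
  have hki := (hw k hk).1
  have hkj := (hw k hk).2.1
  refine Or.inr ⟨hij, hki, hkj, ⟨hki.ne', w.takeUntil k hks, fun u hu => ?_⟩,
    ⟨hkj.ne', w.reverse.takeUntil k hks', fun u hu => ?_⟩⟩
  · obtain ⟨hi, -, hu⟩ := below u (w.interior_takeUntil_subset hks hu)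
      (ne_of_mem_of_not_mem hu (w.end_notMem_interior_takeUntil hks))
    exact ⟨hi, hu, hu⟩
  · have hu' := w.reverse.interior_takeUntil_subset hks' hu
    rw [Walk.interior_reverse, List.mem_reverse] at hu'
    obtain ⟨-, hj, hu⟩ := below u hu'
      (ne_of_mem_of_not_mem hu (w.reverse.end_notMem_interior_takeUntil hks'))
    exact ⟨hj, hu, hu⟩

theorem elimStep_le_fillGraph_succ (G : SimpleGraph (Fin n)) (k : Fin n) :
    elimStep k (fillGraph G k) ≤ fillGraph G (k + 1) := by
  rintro i j (h | ⟨hij, hki, hkj, ⟨-, w₁, hw₁⟩, ⟨-, w₂, hw₂⟩⟩)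
  · exact fillGraph_le_succ G k h
  refine ⟨hij, w₁.append w₂.reverse, fun u hu => ?_⟩
  have hu' := Walk.interior_append_subset _ _ hu
  rw [List.mem_append, List.mem_cons] at hu'
  rcases hu' with hu | rfl | hu
  · obtain ⟨hi, hk, hk'⟩ := hw₁ u hu
    exact ⟨hi, hk.trans hkj, Nat.lt_succ_of_lt hk'⟩
  · exact ⟨hki, hkj, Nat.lt_succ_self _⟩
  · rw [Walk.interior_reverse, List.mem_reverse] at hu
    obtain ⟨hj, hk, hk'⟩ := hw₂ u hu
    exact ⟨hk.trans hki, hj, Nat.lt_succ_of_lt hk'⟩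

theorem fillGraph_succ (G : SimpleGraph (Fin n)) (k : Fin n) :
    fillGraph G (k + 1) = elimStep k (fillGraph G k) :=
  le_antisymm (fillGraph_succ_le_elimStep G k) (elimStep_le_fillGraph_succ G k)

theorem elimSeq_eq_fillGraph (A : Matrix (Fin n) (Fin n) ℝ) {m : ℕ} (hm : m ≤ n) :
    elimSeq A m = fillGraph (graphOf A) m := by
  induction m with
  | zero => exact (fillGraph_zero _).symm
  | succ m ih =>
    rw [elimSeq, dif_pos (show m < n from hm), ih (by omega)]
    exact (fillGraph_succ _ ⟨m, hm⟩).symm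

end Fill

/-- Gilbert's fill-path characterization of symbolic elimination: in the
final graph `G_n` produced by symbolic Gaussian elimination, `i` and `j` are adjacent iff
the fill relation `fill A i j` holds, i.e. `i ≠ j` and there is a walk from `i` to `j` in
`G(A)` all of whose interior vertices `u` satisfy `u < i` and `u < j`. -/
theorem elimSeq_adj_iff_fill {n : ℕ} (A : Matrix (Fin n) (Fin n) ℝ) (i j : Fin n) :
    (elimSeq A n).Adj i j ↔ fill A i j := by
  rw [elimSeq_eq_fillGraph A le_rfl]
  exact ⟨fun ⟨hij, w, hw⟩ => ⟨hij, w, fun u hu => ⟨(hw u hu).1, (hw u hu).2.1⟩⟩,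
    fun ⟨hij, w, hw⟩ => ⟨hij, w, fun u hu => ⟨(hw u hu).1, (hw u hu).2, u.isLt⟩⟩⟩
end
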